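/- Let (W_t)_{t ≥ 1} be independent, identically distributed real-valued random variables, let α ≥ 1 be an integer and b > 0. Define the CuSum statistic c_0 = 0, c_t = max(c_{t−1} + W_t, 0), and the stopping time T = inf{ t ≥ 1 : c_t ≥ b }. Then for every integer ℓ ≥ 1, P[T > ℓα] ≤ ( P[ max_{1 ≤ i ≤ α} ∑_{j=i}^{α} W_j < b ] )^{ℓ}. -/

import Mathlib

/-!
Every suffix sum `W_{i+1} + ⋯ + W_t` is at most `c_t`, since `c` only ever adds the increments or
resets to `0`. So on `{T > ℓα}` each of the first `ℓ` blocks of `α` consecutive increments has all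
its suffix sums below `b`. These `ℓ` block events are generated by disjoint groups of independent
increments, hence independent, and each has the probability of the first one, which is the event
on the right-hand side.
-/

open MeasureTheory ProbabilityTheory
open scoped ENNReal

noncomputable section

namespace QCDStmt

/-- The CuSum recursion `c 0 = 0`, `c (t+1) = max (c t + W t) 0`
(here `W t` is the increment of the `(t+1)`-st observation). -/
def cusumW {Ω : Type*} (W : ℕ → Ω → ℝ) : ℕ → Ω → ℝ
  | 0 => fun _ => 0
  | t + 1 => fun ω => max (cusumW W t ω + W t ω) 0

/-- The CuSum stopping time `T = inf {t ≥ 1 : c t ≥ b}` (with `inf ∅ = ∞`). -/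
def cusumWHit {Ω : Type*} (W : ℕ → Ω → ℝ) (b : ℝ) (ω : Ω) : ℕ∞ :=
  sInf {s : ℕ∞ | ∃ t : ℕ, s = (t : ℕ∞) ∧ 1 ≤ t ∧ b ≤ cusumW W t ω}

section CuSum

variable {Ω : Type*} (W : ℕ → Ω → ℝ)

theorem cusumW_nonneg : ∀ t ω, 0 ≤ cusumW W t ω
  | 0, _ => le_rfl
  | _ + 1, _ => le_max_right _ _

theorem sum_Ico_le_cusumW (ω : Ω) {i t : ℕ} (hit : i ≤ t) :
    ∑ j ∈ Finset.Ico i t, W j ω ≤ cusumW W t ω := by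
  induction t, hit using Nat.le_induction with
  | base => simpa using cusumW_nonneg W i ω
  | succ t hit ih =>
    rw [Finset.sum_Ico_succ_top hit]
    exact (add_le_add_left ih _).trans (le_max_left _ _)

theorem cusumW_lt_of_lt_cusumWHit {b : ℝ} {ω : Ω} {t : ℕ} (ht : 1 ≤ t)
    (hT : (t : ℕ∞) < cusumWHit W b ω) : cusumW W t ω < b := by
  by_contra! hb
  exact (sInf_le ⟨t, rfl, ht, hb⟩ : cusumWHit W b ω ≤ t).not_gt hT

end CuSum

open Function

section Independence

variable {Ω ι κ β : Type*} {mΩ : MeasurableSpace Ω} {P : Measure Ω}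

theorem iIndep_iSup_of_pairwise_disjoint {m : ι → MeasurableSpace Ω} (h_le : ∀ i, m i ≤ mΩ)
    (h_indep : iIndep m P) {S : κ → Set ι} (hS : Pairwise (Disjoint on S)) :
    iIndep (fun k => ⨆ i ∈ S k, m i) P := by
  classical
  rw [iIndep_iff]
  intro s E hE
  induction s using Finset.induction_on with
  | empty => simp [h_indep.isProbabilityMeasure.measure_univ]
  | insert a s ha ih =>
    have hdisj : Disjoint (S a) (⋃ k ∈ s, S k) :=
      Set.disjoint_iUnion₂_right.2 fun k hk => hS (ne_of_mem_of_not_mem hk ha).symm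
    have hEs : MeasurableSet[⨆ i ∈ ⋃ k ∈ s, S k, m i] (⋂ k ∈ s, E k) :=
      .biInter s.countable_toSet fun k hk =>
        (biSup_mono (f := m) fun _ hi => Set.mem_biUnion hk hi) _
          (hE k (Finset.mem_insert_of_mem hk))
    rw [Finset.set_biInter_insert, Finset.prod_insert ha,
      (Indep_iff _ _ _).1 (indep_iSup_of_disjoint h_le h_indep hdisj) _ _
        (hE a (Finset.mem_insert_self a s)) hEs,
      ih fun k hk => hE k (Finset.mem_insert_of_mem hk)]

variable [MeasurableSpace β]

theorem iIndepFun.identDistrib_of_injective [Fintype κ] {W : ι → Ω → β}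
    (hmeas : ∀ i, Measurable (W i)) (hindep : iIndepFun W P) {g g' : κ → ι}
    (hg : g.Injective) (hg' : g'.Injective) (hident : ∀ k, P.map (W (g k)) = P.map (W (g' k))) :
    IdentDistrib (fun ω k => W (g k) ω) (fun ω k => W (g' k) ω) P P := by
  have := hindep.isProbabilityMeasure
  refine ⟨(measurable_pi_lambda _ fun k => hmeas (g k)).aemeasurable,
    (measurable_pi_lambda _ fun k => hmeas (g' k)).aemeasurable, ?_⟩
  rw [(hindep.precomp hg).map_fun_eq_pi_map fun k => (hmeas (g k)).aemeasurable,
    (hindep.precomp hg').map_fun_eq_pi_map fun k => (hmeas (g' k)).aemeasurable]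
  exact congrArg Measure.pi (funext hident)

end Independence

section Blocks

variable {Ω β : Type*}

def block (W : ℕ → Ω → β) (α k : ℕ) (ω : Ω) : Fin α → β := fun i => W (k * α + i) ω

def suffixSumsLt (α : ℕ) (b : ℝ) : Set (Fin α → ℝ) := {x | ∀ i, ∑ j ∈ Finset.Ici i, x j < b}

theorem measurableSet_suffixSumsLt (α : ℕ) (b : ℝ) : MeasurableSet (suffixSumsLt α b) := by
  simp only [suffixSumsLt, Set.ofPred_forall]
  exact .iInter fun i => measurableSet_lt
    (Finset.measurable_sum _ fun j _ => measurable_pi_apply j) measurable_const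

theorem sum_Ici_block (W : ℕ → Ω → ℝ) (α k : ℕ) (ω : Ω) (i : Fin α) :
    ∑ j ∈ Finset.Ici i, block W α k ω j = ∑ j ∈ Finset.Ico (k * α + i) (k * α + α), W j ω := by
  calc ∑ j ∈ Finset.Ici i, W (k * α + j) ω
      = ∑ j ∈ (Finset.Ici i).map Fin.valEmbedding, W (k * α + j) ω :=
        (Finset.sum_map (Finset.Ici i) Fin.valEmbedding fun j => W (k * α + j) ω).symm
    _ = ∑ j ∈ Finset.Ico (i : ℕ) α, W (k * α + j) ω := by rw [Fin.map_valEmbedding_Ici]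
    _ = _ := by
      rw [Finset.sum_Ico_add (fun j => W j ω), add_comm (i : ℕ), add_comm α]

theorem block_mem_suffixSumsLt_iff (W : ℕ → Ω → ℝ) (α k : ℕ) (b : ℝ) (ω : Ω) :
    block W α k ω ∈ suffixSumsLt α b ↔
      ∀ i < α, ∑ j ∈ Finset.Ico (k * α + i) (k * α + α), W j ω < b := by
  simp only [suffixSumsLt, Set.mem_ofPred_eq, sum_Ici_block, Fin.forall_iff]

theorem measurable_block [mβ : MeasurableSpace β] (W : ℕ → Ω → β) (α k : ℕ) :
    Measurable[⨆ j ∈ Set.Ico (k * α) (k * α + α), mβ.comap (W j)] (block W α k) := by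
  let : MeasurableSpace Ω := ⨆ j ∈ Set.Ico (k * α) (k * α + α), mβ.comap (W j)
  exact measurable_pi_lambda _ fun i => (comap_measurable (W (k * α + i))).mono
    (le_biSup (fun j => mβ.comap (W j)) ⟨Nat.le_add_right _ _, by omega⟩) le_rfl

theorem pairwise_disjoint_Ico_mul (α : ℕ) :
    Pairwise (Disjoint on fun k : ℕ => Set.Ico (k * α) (k * α + α)) := by
  refine (pairwise_disjoint_on _).2 fun k k' hkk' => Set.disjoint_left.2 fun j hj hj' => ?_
  have : (k + 1) * α ≤ k' * α := Nat.mul_le_mul_right α hkk'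
  simp only [Set.mem_Ico] at hj hj'
  nlinarith

theorem iIndepFun_block [MeasurableSpace Ω] [MeasurableSpace β] {P : Measure Ω}
    {W : ℕ → Ω → β} (hmeas : ∀ t, Measurable (W t)) (hindep : iIndepFun W P) (α : ℕ) :
    iIndepFun (block W α) P := by
  have h := iIndep_iSup_of_pairwise_disjoint (fun j => (hmeas j).comap_le) hindep.iIndep
    (pairwise_disjoint_Ico_mul α)
  exact (iIndepFun_iff _ _ _).2 fun s E hE => h.meas_biInter fun k hk =>
    measurable_iff_comap_le.1 (measurable_block W α k) _ (hE k hk)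

theorem identDistrib_block [MeasurableSpace Ω] [MeasurableSpace β] {P : Measure Ω}
    {W : ℕ → Ω → β} (hmeas : ∀ t, Measurable (W t)) (hindep : iIndepFun W P)
    (hident : ∀ t, P.map (W t) = P.map (W 0)) (α k k' : ℕ) :
    IdentDistrib (block W α k) (block W α k') P P :=
  iIndepFun.identDistrib_of_injective hmeas hindep
    (fun _ _ h => Fin.ext (Nat.add_left_cancel h)) (fun _ _ h => Fin.ext (Nat.add_left_cancel h))
    fun _ => (hident _).trans (hident _).symm

end Blocks

theorem setOf_lt_cusumWHit_subset_iInter_block {Ω : Type*} (W : ℕ → Ω → ℝ) (α ℓ : ℕ) (b : ℝ) :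
    {ω | ((ℓ * α : ℕ) : ℕ∞) < cusumWHit W b ω} ⊆
      ⋂ k ∈ Finset.range ℓ, block W α k ⁻¹' suffixSumsLt α b := by
  intro ω hω
  simp only [Set.mem_iInter, Set.mem_preimage, Finset.mem_range, block_mem_suffixSumsLt_iff]
  intro k hk i hi
  have hkℓ : k * α + α ≤ ℓ * α := by nlinarith
  calc _ ≤ cusumW W (k * α + α) ω := sum_Ico_le_cusumW W ω (by omega)
    _ < b := cusumW_lt_of_lt_cusumWHit W (by omega) (lt_of_le_of_lt (by exact_mod_cast hkℓ) hω)

theorem setOf_sSup_sum_Ico_lt_eq_preimage_block {Ω : Type*} (W : ℕ → Ω → ℝ) {α : ℕ}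
    (hα : 1 ≤ α) (b : ℝ) :
    {ω | sSup ((fun i : ℕ => ∑ j ∈ Finset.Ico i α, W j ω) '' Set.Iio α) < b} =
      block W α 0 ⁻¹' suffixSumsLt α b := by
  ext ω
  rw [Set.mem_preimage, block_mem_suffixSumsLt_iff, Set.mem_ofPred_eq,
    ((Set.finite_Iio α).image _).csSup_lt_iff (Set.Nonempty.image _ ⟨0, hα⟩)]
  simp only [Set.forall_mem_image, Set.mem_Iio, zero_mul, zero_add]

theorem cusum_block_tail_bound_general
    {Ω : Type*} [MeasurableSpace Ω] (P : Measure Ω)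
    (W : ℕ → Ω → ℝ) (hmeas : ∀ t, Measurable (W t))
    (hindep : iIndepFun W P)
    (hident : ∀ t, Measure.map (W t) P = Measure.map (W 0) P)
    (α : ℕ) (hα : 1 ≤ α) (b : ℝ) (ℓ : ℕ) :
    P {ω | ((ℓ * α : ℕ) : ℕ∞) < cusumWHit W b ω} ≤
      (P {ω | sSup ((fun i : ℕ => ∑ j ∈ Finset.Ico i α, W j ω) '' Set.Iio α) < b}) ^ ℓ := by
  have hA := measurableSet_suffixSumsLt α b
  calc P {ω | ((ℓ * α : ℕ) : ℕ∞) < cusumWHit W b ω}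
      ≤ P (⋂ k ∈ Finset.range ℓ, block W α k ⁻¹' suffixSumsLt α b) :=
        measure_mono (setOf_lt_cusumWHit_subset_iInter_block W α ℓ b)
    _ = ∏ k ∈ Finset.range ℓ, P (block W α k ⁻¹' suffixSumsLt α b) :=
        (iIndepFun_block hmeas hindep α).measure_inter_preimage_eq_mul _ fun _ _ => hA
    _ = ∏ _k ∈ Finset.range ℓ, P (block W α 0 ⁻¹' suffixSumsLt α b) :=
        Finset.prod_congr rfl fun k _ =>
          (identDistrib_block hmeas hindep hident α k 0).measure_mem_eq hA
    _ = _ := by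
        rw [Finset.prod_const, Finset.card_range, setOf_sSup_sum_Ico_lt_eq_preimage_block W hα b]

/-- **Block tail bound for the CuSum stopping time.** If `W 0, W 1, …` are i.i.d.
(with `W j` playing the role of `W_{j+1}`), `α ≥ 1` and `b > 0`, then for every `ℓ ≥ 1`,
`P[T > ℓα] ≤ (P[max_{1 ≤ i ≤ α} ∑_{j=i}^{α} W_j < b])^ℓ`, where the inner maximum is
`sSup ((fun i => ∑ j ∈ Finset.Ico i α, W j ω) '' Set.Iio α)` (indices shifted by one). -/
theorem cusum_block_tail_bound
    {Ω : Type*} [MeasurableSpace Ω] (P : Measure Ω) [IsProbabilityMeasure P]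
    (W : ℕ → Ω → ℝ) (hmeas : ∀ t, Measurable (W t))
    (hindep : iIndepFun W P)
    (hident : ∀ t, Measure.map (W t) P = Measure.map (W 0) P)
    (α : ℕ) (hα : 1 ≤ α) (b : ℝ) (hb : 0 < b) (ℓ : ℕ) (hℓ : 1 ≤ ℓ) :
    P {ω | ((ℓ * α : ℕ) : ℕ∞) < cusumWHit W b ω} ≤
      (P {ω | sSup ((fun i : ℕ => ∑ j ∈ Finset.Ico i α, W j ω) '' Set.Iio α) < b}) ^ ℓ :=
  cusum_block_tail_bound_general P W hmeas hindep hident α hα b ℓ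

end QCDStmt
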